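/- Equivalence of the two definitions of positive (p₁,…,p_m;r)-dominated multilinear operators: let 1 ≤ r, p, p₁,…,p_m ≤ ∞ with 1/p = 1/p₁ + ⋯ + 1/p_m + 1/r, E₁,…,E_m, F Banach lattices, and T ∈ L(E₁,…,E_m;F). Then T satisfies the domination inequality (Σ_i |⟨T(x_i¹,…,x_i^m), y_i*⟩|^p)^{1/p} ≤ C ∏_j ‖(x_i^j)‖_{p_j,w} ‖(y_i*)‖_{r,w} for all positive families x_i^j ∈ E_j⁺, y_i* ∈ F*⁺ with some constant C, if and only if T satisfies (Σ_i |⟨T(x_i¹,…,x_i^m), y_i*⟩|^p)^{1/p} ≤ C' ∏_j ‖(x_i^j)‖_{p_j,|w|} ‖(y_i*)‖_{r,|w|} for all (not necessarily positive) families x_i^j ∈ E_j, y_i* ∈ F* with some constant C'. Moreover, one can take C' ≤ 2^{m+1} C (and C ≤ C'). -/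

import Mathlib

/-!
Split each vector as `x = x⁺ - x⁻` and each functional as `y = y₁ - y₂` with
`0 ≤ y₁, y₂ ≤ |y|`, where `yₖ = (|y| ± y) / 2`. Multilinearity expands `⟨T x, y⟩` into
`2^(m+1)` terms with positive arguments, each bounded by the positive domination inequality.
The weak norms of the positive pieces are at most those of `|x|` and `|y|`: by Hahn–Banach,
`‖(uᵢ)‖_{q,w} ≤ ‖(vᵢ)‖_{q,w}` as soon as `‖∑ cᵢ uᵢ‖ ≤ ‖∑ |cᵢ| vᵢ‖` for all scalars `c`,
and the solid norm gives this when `|uᵢ| ≤ vᵢ`. Conversely, for positive families `|x| = x`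
and `|y| = y`.
-/

/-- The weak `ℓ_p` norm of a finite family in a Banach space, over the dual unit ball. -/
noncomputable def wnorm {E : Type*} [NormedAddCommGroup E] [NormedSpace ℝ E]
    (p : ℝ) {n : ℕ} (x : Fin n → E) : ℝ :=
  sSup {s : ℝ | ∃ φ : E →L[ℝ] ℝ, ‖φ‖ ≤ 1 ∧ s = (∑ i, |φ (x i)| ^ p) ^ (1 / p)}

/-- The weak `ℓ_r` norm of a finite family of functionals on `F`, computed against
the bidual unit ball. -/
noncomputable def wnormDual {F : Type*} [NormedAddCommGroup F] [NormedSpace ℝ F]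
    (r : ℝ) {n : ℕ} (y : Fin n → (F →L[ℝ] ℝ)) : ℝ :=
  sSup {s : ℝ | ∃ ψ : (F →L[ℝ] ℝ) →L[ℝ] ℝ, ‖ψ‖ ≤ 1 ∧
    s = (∑ i, |ψ (y i)| ^ r) ^ (1 / r)}

open Filter Topology

section LatticeOrderedGroup

variable {X : Type*} [Lattice X] [AddCommGroup X] [IsOrderedAddMonoid X]

lemma nonneg_of_two_pow_nsmul_nonneg {z : X} (k : ℕ) (h : 0 ≤ 2 ^ k • z) : 0 ≤ z := by
  induction k generalizing z with
  | zero => simpa using h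
  | succ k ih => exact nsmul_two_semiclosed (ih (by rwa [← mul_nsmul, ← pow_succ']))

lemma abs_sum_le_sum_abs' {ι : Type*} (s : Finset ι) (f : ι → X) :
    |∑ i ∈ s, f i| ≤ ∑ i ∈ s, |f i| := by
  classical
  induction s using Finset.induction_on with
  | empty => simp
  | insert a s ha ih =>
    rw [Finset.sum_insert ha, Finset.sum_insert ha]
    exact (abs_add_le _ _).trans (add_le_add_right ih _)

end LatticeOrderedGroup

section NormedLattice

variable {X : Type*} [NormedAddCommGroup X] [Lattice X] [IsOrderedAddMonoid X]
  [HasSolidNorm X] [NormedSpace ℝ X]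

/- No compatibility between the order and the scalar action is assumed: halving is exact in a
lattice-ordered group, so `c • u ≥ 0` for dyadic `c`, and the positive cone is closed. -/
lemma smul_nonneg_of_hasSolidNorm {c : ℝ} (hc : 0 ≤ c) {u : X} (hu : 0 ≤ u) : 0 ≤ c • u := by
  have hdyadic : ∀ k : ℕ, 0 ≤ ((⌊c * 2 ^ k⌋₊ : ℝ) / 2 ^ k) • u := by
    intro k
    have hhalf : 0 ≤ ((2 : ℝ) ^ k)⁻¹ • u := by
      refine nonneg_of_two_pow_nsmul_nonneg k ?_
      rwa [← Nat.cast_smul_eq_nsmul ℝ, Nat.cast_pow, Nat.cast_ofNat, smul_inv_smul₀ (by positivity)]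
    rw [div_eq_mul_inv, mul_smul, Nat.cast_smul_eq_nsmul]
    exact nsmul_nonneg hhalf _
  have hlim : Tendsto (fun k : ℕ => ((⌊c * 2 ^ k⌋₊ : ℝ) / 2 ^ k) • u) atTop (𝓝 (c • u)) :=
    ((tendsto_nat_floor_mul_div_atTop hc).comp
      (tendsto_pow_atTop_atTop_of_one_lt one_lt_two)).smul_const u
  exact isClosed_nonneg.mem_of_tendsto hlim (Eventually.of_forall hdyadic)

lemma posSMulMono_of_hasSolidNorm : PosSMulMono ℝ X :=
  .of_smul_nonneg fun _ hc _ hu => smul_nonneg_of_hasSolidNorm hc hu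

lemma abs_smul_le_smul_abs (c : ℝ) (u : X) : |c • u| ≤ |c| • |u| := by
  have := posSMulMono_of_hasSolidNorm (X := X)
  have key : ∀ a : ℝ, 0 ≤ a → |a • u| ≤ a • |u| := fun a ha =>
    abs_le'.2 ⟨smul_le_smul_of_nonneg_left (le_abs_self u) ha,
      by rw [← smul_neg]; exact smul_le_smul_of_nonneg_left (neg_le_abs u) ha⟩
  rcases le_total 0 c with hc | hc
  · rw [abs_of_nonneg hc]; exact key c hc
  · rw [abs_of_nonpos hc, ← abs_neg, ← neg_smul]; exact key (-c) (neg_nonneg.2 hc)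

lemma norm_sum_smul_le_of_abs_le {ι : Type*} [Fintype ι] {u v : ι → X} (h : ∀ i, |u i| ≤ v i)
    (c : ι → ℝ) : ‖∑ i, c i • u i‖ ≤ ‖∑ i, |c i| • v i‖ := by
  have := posSMulMono_of_hasSolidNorm (X := X)
  refine HasSolidNorm.solid ?_
  have hv : 0 ≤ ∑ i, |c i| • v i :=
    Finset.sum_nonneg fun i _ => smul_nonneg (abs_nonneg _) ((abs_nonneg _).trans (h i))
  rw [abs_of_nonneg hv]
  calc |∑ i, c i • u i| ≤ ∑ i, |c i • u i| := abs_sum_le_sum_abs' _ _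
    _ ≤ ∑ i, |c i| • v i := Finset.sum_le_sum fun i _ =>
        (abs_smul_le_smul_abs _ _).trans (smul_le_smul_of_nonneg_left (h i) (abs_nonneg _))

end NormedLattice

section LpNorm

variable {ι : Type*} [Fintype ι] {q : ℝ}

lemma fact_one_le_ofReal (hq : 1 ≤ q) : Fact (1 ≤ ENNReal.ofReal q) :=
  ⟨by simpa using hq⟩

lemma norm_toLp_ofReal (hq : 1 ≤ q) (f : ι → ℝ) :
    ‖WithLp.toLp (ENNReal.ofReal q) f‖ = (∑ i, |f i| ^ q) ^ (1 / q) := by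
  rw [PiLp.norm_eq_sum (by rw [ENNReal.toReal_ofReal (by linarith)]; linarith),
    ENNReal.toReal_ofReal (by linarith)]
  simp only [Real.norm_eq_abs]

lemma rpow_sum_le_of_abs_le (hq : 1 ≤ q) {f g : ι → ℝ} (h : ∀ i, |f i| ≤ |g i|) :
    (∑ i, |f i| ^ q) ^ (1 / q) ≤ (∑ i, |g i| ^ q) ^ (1 / q) := by
  have hq0 : 0 ≤ q := by linarith
  gcongr ?_ ^ _
  exact Finset.sum_le_sum fun i _ => Real.rpow_le_rpow (abs_nonneg _) (h i) hq0

lemma rpow_sum_le_sum_of_abs_le_sum (hq : 1 ≤ q) {κ : Type*} (K : Finset κ) {f : ι → ℝ}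
    {g : κ → ι → ℝ} (h : ∀ i, |f i| ≤ ∑ k ∈ K, |g k i|) :
    (∑ i, |f i| ^ q) ^ (1 / q) ≤ ∑ k ∈ K, (∑ i, |g k i| ^ q) ^ (1 / q) := by
  have := fact_one_le_ofReal hq
  calc (∑ i, |f i| ^ q) ^ (1 / q) ≤ (∑ i, |(∑ k ∈ K, |g k i|)| ^ q) ^ (1 / q) :=
        rpow_sum_le_of_abs_le hq fun i => (h i).trans (le_abs_self _)
    _ = ‖∑ k ∈ K, WithLp.toLp (ENNReal.ofReal q) fun i => |g k i|‖ := by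
        rw [← WithLp.toLp_sum, norm_toLp_ofReal hq]
        simp only [Finset.sum_apply]
    _ ≤ ∑ k ∈ K, ‖WithLp.toLp (ENNReal.ofReal q) fun i => |g k i|‖ := norm_sum_le _ _
    _ = ∑ k ∈ K, (∑ i, |g k i| ^ q) ^ (1 / q) := by
        simp only [norm_toLp_ofReal hq, abs_abs]

lemma rpow_sum_le_add_of_abs_le_add (hq : 1 ≤ q) {f g h : ι → ℝ}
    (hf : ∀ i, |f i| ≤ |g i| + |h i|) :
    (∑ i, |f i| ^ q) ^ (1 / q) ≤ (∑ i, |g i| ^ q) ^ (1 / q) + (∑ i, |h i| ^ q) ^ (1 / q) :=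
  calc (∑ i, |f i| ^ q) ^ (1 / q) ≤ (∑ i, |(|g i| + |h i|)| ^ q) ^ (1 / q) :=
        rpow_sum_le_of_abs_le hq fun i => (hf i).trans (le_abs_self _)
    _ ≤ (∑ i, |(|g i|)| ^ q) ^ (1 / q) + (∑ i, |(|h i|)| ^ q) ^ (1 / q) :=
        Real.Lp_add_le _ _ _ hq
    _ = (∑ i, |g i| ^ q) ^ (1 / q) + (∑ i, |h i| ^ q) ^ (1 / q) := by simp only [abs_abs]

lemma abs_sign_mul_le (a b : ℝ) : |(SignType.sign a : ℝ) * b| ≤ |b| := by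
  rw [abs_mul]
  refine mul_le_of_le_one_left (abs_nonneg _) ?_
  rcases SignType.sign a with _ | _ | _ <;> simp

end LpNorm

section WeakNorm

variable {E : Type*} [NormedAddCommGroup E] [NormedSpace ℝ E] {q : ℝ} {n : ℕ}

lemma bddAbove_wnorm_set (hq : 1 ≤ q) (x : Fin n → E) :
    BddAbove {s : ℝ | ∃ φ : E →L[ℝ] ℝ, ‖φ‖ ≤ 1 ∧ s = (∑ i, |φ (x i)| ^ q) ^ (1 / q)} := by
  refine ⟨(∑ i, |‖x i‖| ^ q) ^ (1 / q), ?_⟩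
  rintro _ ⟨φ, hφ, rfl⟩
  refine rpow_sum_le_of_abs_le hq fun i => ?_
  rw [abs_norm]
  exact (φ.le_of_opNorm_le hφ (x i)).trans_eq (one_mul _)

lemma le_wnorm (hq : 1 ≤ q) (x : Fin n → E) {φ : E →L[ℝ] ℝ} (hφ : ‖φ‖ ≤ 1) :
    (∑ i, |φ (x i)| ^ q) ^ (1 / q) ≤ wnorm q x :=
  le_csSup (bddAbove_wnorm_set hq x) ⟨φ, hφ, rfl⟩

lemma wnorm_nonneg (hq : 1 ≤ q) (x : Fin n → E) : 0 ≤ wnorm q x :=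
  le_trans (by positivity) (le_wnorm hq x (φ := 0) (by simp))

lemma wnorm_le_wnorm_of_norm_sum_smul_le (hq : 1 ≤ q) {u v : Fin n → E}
    (h : ∀ c : Fin n → ℝ, ‖∑ i, c i • u i‖ ≤ ‖∑ i, |c i| • v i‖) : wnorm q u ≤ wnorm q v := by
  have := fact_one_le_ofReal hq
  refine csSup_le ⟨_, 0, by simp, rfl⟩ ?_
  rintro _ ⟨φ, hφ, rfl⟩
  obtain ⟨f, hf, hfu⟩ :=
    exists_dual_vector'' ℝ (WithLp.toLp (ENNReal.ofReal q) fun i => φ (u i))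
  set c : Fin n → ℝ := fun i => f (WithLp.toLp _ (Pi.single i 1))
  have hf_apply : ∀ t : Fin n → ℝ, f (WithLp.toLp _ t) = ∑ i, t i * c i := fun t => by
    conv_lhs => rw [← Finset.univ_sum_single t]
    rw [WithLp.toLp_sum, map_sum]
    refine Finset.sum_congr rfl fun i _ => ?_
    rw [← smul_eq_mul, ← map_smul, ← WithLp.toLp_smul, ← Pi.single_smul', smul_eq_mul, mul_one]
  obtain ⟨g, hg, hgv⟩ := exists_dual_vector'' ℝ (∑ i, |c i| • v i)
  have hgv' : g (∑ i, |c i| • v i) = ‖∑ i, |c i| • v i‖ := hgv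
  -- `f` norms `(φ uᵢ)` in `ℓ_q` and `g` norms `∑ |cᵢ| vᵢ`; the family `(sign cᵢ · g vᵢ)` then
  -- links the two through `f`.
  calc (∑ i, |φ (u i)| ^ q) ^ (1 / q) = f (WithLp.toLp _ fun i => φ (u i)) := by
        rw [← norm_toLp_ofReal hq]; exact hfu.symm
    _ = φ (∑ i, c i • u i) := by
        simp only [hf_apply, map_sum, map_smul, smul_eq_mul, mul_comm]
    _ ≤ ‖∑ i, c i • u i‖ :=
        (Real.le_norm_self _).trans ((φ.le_of_opNorm_le hφ _).trans_eq (one_mul _))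
    _ ≤ ‖∑ i, |c i| • v i‖ := h c
    _ = f (WithLp.toLp _ fun i => SignType.sign (c i) * g (v i)) := by
        rw [hf_apply, ← hgv', map_sum]
        refine Finset.sum_congr rfl fun i _ => ?_
        rw [map_smul, smul_eq_mul, mul_right_comm, sign_mul_self, mul_comm]
    _ ≤ ‖WithLp.toLp (ENNReal.ofReal q) fun i => SignType.sign (c i) * g (v i)‖ :=
        (Real.le_norm_self _).trans ((f.le_of_opNorm_le hf _).trans_eq (one_mul _))
    _ ≤ (∑ i, |g (v i)| ^ q) ^ (1 / q) := by
        rw [norm_toLp_ofReal hq]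
        exact rpow_sum_le_of_abs_le hq fun i => abs_sign_mul_le _ _
    _ ≤ wnorm q v := le_wnorm hq v hg

lemma wnorm_le_wnorm_of_abs_le {X : Type*} [NormedAddCommGroup X] [Lattice X]
    [IsOrderedAddMonoid X] [HasSolidNorm X] [NormedSpace ℝ X] (hq : 1 ≤ q) {u v : Fin n → X}
    (h : ∀ i, |u i| ≤ v i) : wnorm q u ≤ wnorm q v :=
  wnorm_le_wnorm_of_norm_sum_smul_le hq (norm_sum_smul_le_of_abs_le h)

lemma wnormDual_eq_wnorm {F : Type*} [NormedAddCommGroup F] [NormedSpace ℝ F]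
    (r : ℝ) {n : ℕ} (y : Fin n → (F →L[ℝ] ℝ)) : wnormDual r y = wnorm r y := rfl

lemma wnormDual_nonneg {F : Type*} [NormedAddCommGroup F] [NormedSpace ℝ F] (hq : 1 ≤ q)
    (y : Fin n → (F →L[ℝ] ℝ)) : 0 ≤ wnormDual q y := by
  rw [wnormDual_eq_wnorm]
  exact wnorm_nonneg hq y

end WeakNorm

lemma exists_sub_eq_of_abs_apply_le {F : Type*} [NormedAddCommGroup F] [NormedSpace ℝ F] [LE F]
    {y a : F →L[ℝ] ℝ} (h : ∀ z, 0 ≤ z → |y z| ≤ a z) :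
    ∃ y₁ y₂ : F →L[ℝ] ℝ, y = y₁ - y₂ ∧
      (∀ z, 0 ≤ z → 0 ≤ y₁ z ∧ y₁ z ≤ a z) ∧ (∀ z, 0 ≤ z → 0 ≤ y₂ z ∧ y₂ z ≤ a z) := by
  refine ⟨(2⁻¹ : ℝ) • (a + y), (2⁻¹ : ℝ) • (a - y), ?_, fun z hz => ?_, fun z hz => ?_⟩
  · ext z
    simp only [sub_apply, smul_apply, add_apply, smul_eq_mul]
    ring
  all_goals
    have := abs_le.1 (h z hz)
    simp only [smul_apply, add_apply, sub_apply, smul_eq_mul]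
    constructor <;> linarith

section DualOfLattice

variable {F : Type*} [NormedAddCommGroup F] [Lattice F] [IsOrderedAddMonoid F] [NormedSpace ℝ F]
  {n : ℕ} {q : ℝ}

lemma abs_apply_le_apply_abs {u v : F →L[ℝ] ℝ} (h : ∀ z, 0 ≤ z → |u z| ≤ v z) (z : F) :
    |u z| ≤ v |z| :=
  calc |u z| = |u z⁺ - u z⁻| := by rw [← map_sub, posPart_sub_negPart]
    _ ≤ |u z⁺| + |u z⁻| := abs_sub _ _
    _ ≤ v z⁺ + v z⁻ := add_le_add (h _ (posPart_nonneg z)) (h _ (negPart_nonneg z))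
    _ = v |z| := by rw [← map_add, posPart_add_negPart]

lemma norm_sum_smul_le_of_abs_apply_le [HasSolidNorm F] {ι : Type*} [Fintype ι]
    {u v : ι → F →L[ℝ] ℝ} (h : ∀ i z, 0 ≤ z → |u i z| ≤ v i z) (c : ι → ℝ) :
    ‖∑ i, c i • u i‖ ≤ ‖∑ i, |c i| • v i‖ := by
  refine ContinuousLinearMap.opNorm_le_bound _ (norm_nonneg _) fun z => ?_
  calc ‖(∑ i, c i • u i) z‖ = |∑ i, c i * u i z| := by
        simp only [sum_apply, smul_apply, smul_eq_mul, Real.norm_eq_abs]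
    _ ≤ ∑ i, |c i| * |u i z| := (Finset.abs_sum_le_sum_abs _ _).trans_eq (by simp only [abs_mul])
    _ ≤ ∑ i, |c i| * v i |z| := by
        gcongr with i
        exact abs_apply_le_apply_abs (h i) z
    _ = (∑ i, |c i| • v i) |z| := by
        simp only [sum_apply, smul_apply, smul_eq_mul]
    _ ≤ ‖∑ i, |c i| • v i‖ * ‖|z|‖ :=
        (Real.le_norm_self _).trans (ContinuousLinearMap.le_opNorm _ _)
    _ = ‖∑ i, |c i| • v i‖ * ‖z‖ := by rw [norm_abs_eq_norm]

lemma wnorm_le_wnorm_of_abs_apply_le [HasSolidNorm F] (hq : 1 ≤ q) {u v : Fin n → F →L[ℝ] ℝ}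
    (h : ∀ i z, 0 ≤ z → |u i z| ≤ v i z) : wnorm q u ≤ wnorm q v :=
  wnorm_le_wnorm_of_norm_sum_smul_le hq (norm_sum_smul_le_of_abs_apply_le h)

lemma modulus_eq_of_nonneg {φ a : F →L[ℝ] ℝ} (hφ : ∀ z, 0 ≤ z → 0 ≤ φ z)
    (ha : ∀ z, 0 ≤ z → φ z ≤ a z)
    (ha_min : ∀ χ : F →L[ℝ] ℝ, (∀ z, 0 ≤ z → φ z ≤ χ z ∧ -φ z ≤ χ z) → ∀ z, 0 ≤ z → a z ≤ χ z) :
    a = φ := by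
  have hpos : ∀ z, 0 ≤ z → a z = φ z := fun z hz =>
    le_antisymm (ha_min φ (fun w hw => ⟨le_rfl, by linarith [hφ w hw]⟩) z hz) (ha z hz)
  ext z
  rw [← posPart_sub_negPart z, map_sub, map_sub, hpos _ (posPart_nonneg z),
    hpos _ (negPart_nonneg z)]

end DualOfLattice

theorem MultilinearMap.norm_map_sub_le_sum_norm_map_piecewise {R ι G : Type*} {M : ι → Type*}
    [CommRing R] [Fintype ι] [DecidableEq ι] [∀ i, AddCommGroup (M i)] [∀ i, Module R (M i)]
    [SeminormedAddCommGroup G] [Module R G] (f : MultilinearMap R M G) (u v : ∀ i, M i) :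
    ‖f (u - v)‖ ≤ ∑ s : Finset ι, ‖f (s.piecewise u v)‖ := by
  rw [sub_eq_add_neg, f.map_add_univ]
  refine (norm_sum_le _ _).trans_eq (Finset.sum_congr rfl fun s _ => ?_)
  have hsigns : s.piecewise u (-v) =
      sᶜ.piecewise (fun i => (-1 : R) • s.piecewise u v i) (s.piecewise u v) := by
    ext i
    by_cases hi : i ∈ s <;> simp [hi]
  rw [hsigns, f.map_piecewise_smul, Finset.prod_const]
  rcases neg_one_pow_eq_or R sᶜ.card with h | h <;> simp [h]

section Dominated

variable {m : ℕ} {E : Fin m → Type*} [∀ j, NormedAddCommGroup (E j)] [∀ j, Lattice (E j)]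
  [∀ j, IsOrderedAddMonoid (E j)] [∀ j, HasSolidNorm (E j)] [∀ j, NormedSpace ℝ (E j)]
  {F : Type*} [NormedAddCommGroup F] [NormedSpace ℝ F] [Lattice F] {p r C : ℝ} {pj : Fin m → ℝ}

def IsPosDominated (T : ContinuousMultilinearMap ℝ E F) (p r : ℝ) (pj : Fin m → ℝ) (C : ℝ) :
    Prop :=
  ∀ (n : ℕ) (x : Fin n → ∀ j, E j) (y : Fin n → (F →L[ℝ] ℝ)),
    (∀ i j, 0 ≤ x i j) → (∀ i, ∀ z, 0 ≤ z → 0 ≤ y i z) →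
    (∑ i, |y i (T (x i))| ^ p) ^ (1 / p) ≤
      C * (∏ j, wnorm (pj j) (fun i => x i j)) * wnormDual r y

namespace IsPosDominated

variable {T : ContinuousMultilinearMap ℝ E F}

lemma rpow_sum_le_of_nonneg_functionals (hT : IsPosDominated T p r pj C) (hC : 0 ≤ C)
    (hp : 1 ≤ p) (hpj : ∀ j, 1 ≤ pj j) (hr : 1 ≤ r) {n : ℕ} (x : Fin n → ∀ j, E j)
    {y : Fin n → (F →L[ℝ] ℝ)} (hy : ∀ i, ∀ z, 0 ≤ z → 0 ≤ y i z) :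
    (∑ i, |y i (T (x i))| ^ p) ^ (1 / p) ≤
      2 ^ m * C * (∏ j, wnorm (pj j) (fun i => |x i j|)) * wnormDual r y := by
  classical
  set xs : Finset (Fin m) → Fin n → ∀ j, E j :=
    fun s i => s.piecewise (fun j => (x i j)⁺) (fun j => (x i j)⁻)
  have hsplit : ∀ i, |y i (T (x i))| ≤ ∑ s, |y i (T (xs s i))| := fun i => by
    have hx : x i = (fun j => (x i j)⁺) - (fun j => (x i j)⁻) :=
      funext fun j => (posPart_sub_negPart (x i j)).symm
    conv_lhs => rw [hx]
    exact ((y i).toLinearMap.compMultilinearMap T.toMultilinearMap)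
      |>.norm_map_sub_le_sum_norm_map_piecewise _ _
  have hxs_nonneg : ∀ s i j, 0 ≤ xs s i j := fun s i j => by
    by_cases hj : j ∈ s <;> simp [xs, hj]
  have hxs_le : ∀ s i j, |xs s i j| ≤ |x i j| := fun s i j => by
    rw [abs_of_nonneg (hxs_nonneg s i j), ← posPart_add_negPart (x i j)]
    by_cases hj : j ∈ s <;> simp [xs, hj]
  have hpiece : ∀ s, (∑ i, |y i (T (xs s i))| ^ p) ^ (1 / p) ≤
      C * (∏ j, wnorm (pj j) (fun i => |x i j|)) * wnormDual r y := fun s => by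
    refine (hT n (xs s) y (hxs_nonneg s) hy).trans ?_
    gcongr with j
    · exact wnormDual_nonneg hr _
    · exact fun j _ => wnorm_nonneg (hpj j) _
    · exact wnorm_le_wnorm_of_abs_le (hpj j) fun i => hxs_le s i j
  calc (∑ i, |y i (T (x i))| ^ p) ^ (1 / p)
      ≤ ∑ s, (∑ i, |y i (T (xs s i))| ^ p) ^ (1 / p) :=
        rpow_sum_le_sum_of_abs_le_sum hp _ hsplit
    _ ≤ ∑ _s : Finset (Fin m), C * (∏ j, wnorm (pj j) (fun i => |x i j|)) * wnormDual r y :=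
        Finset.sum_le_sum fun s _ => hpiece s
    _ = 2 ^ m * C * (∏ j, wnorm (pj j) (fun i => |x i j|)) * wnormDual r y := by
        rw [Finset.sum_const, Finset.card_univ, Fintype.card_finset, Fintype.card_fin, nsmul_eq_mul]
        push_cast
        ring

lemma rpow_sum_le (hT : IsPosDominated T p r pj C) [IsOrderedAddMonoid F] [HasSolidNorm F]
    (hC : 0 ≤ C) (hp : 1 ≤ p) (hpj : ∀ j, 1 ≤ pj j) (hr : 1 ≤ r)
    {a : (F →L[ℝ] ℝ) → (F →L[ℝ] ℝ)} (ha : ∀ φ z, 0 ≤ z → |φ z| ≤ a φ z) {n : ℕ}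
    (x : Fin n → ∀ j, E j) (y : Fin n → (F →L[ℝ] ℝ)) :
    (∑ i, |y i (T (x i))| ^ p) ^ (1 / p) ≤
      2 ^ (m + 1) * C * (∏ j, wnorm (pj j) (fun i => |x i j|)) *
        wnormDual r (fun i => a (y i)) := by
  choose y₁ y₂ hy hy₁ hy₂ using fun i => exists_sub_eq_of_abs_apply_le (ha (y i))
  have hwnorm : ∀ y' : Fin n → (F →L[ℝ] ℝ), (∀ i z, 0 ≤ z → 0 ≤ y' i z ∧ y' i z ≤ a (y i) z) →
      wnormDual r y' ≤ wnormDual r (fun i => a (y i)) := fun y' hy' => by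
    rw [wnormDual_eq_wnorm, wnormDual_eq_wnorm]
    refine wnorm_le_wnorm_of_abs_apply_le hr fun i z hz => ?_
    rw [abs_of_nonneg (hy' i z hz).1]
    exact (hy' i z hz).2
  set P := ∏ j, wnorm (pj j) (fun i => |x i j|)
  have hP : 0 ≤ 2 ^ m * C * P :=
    mul_nonneg (by positivity) (Finset.prod_nonneg fun j _ => wnorm_nonneg (hpj j) _)
  calc (∑ i, |y i (T (x i))| ^ p) ^ (1 / p)
      ≤ (∑ i, |y₁ i (T (x i))| ^ p) ^ (1 / p) + (∑ i, |y₂ i (T (x i))| ^ p) ^ (1 / p) :=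
        rpow_sum_le_add_of_abs_le_add hp fun i => by
          rw [hy i, sub_apply]
          exact abs_sub _ _
    _ ≤ 2 ^ m * C * P * wnormDual r y₁ + 2 ^ m * C * P * wnormDual r y₂ := by
        gcongr
        · exact hT.rpow_sum_le_of_nonneg_functionals hC hp hpj hr x fun i z hz => (hy₁ i z hz).1
        · exact hT.rpow_sum_le_of_nonneg_functionals hC hp hpj hr x fun i z hz => (hy₂ i z hz).1
    _ ≤ 2 ^ m * C * P * wnormDual r (fun i => a (y i)) +
          2 ^ m * C * P * wnormDual r (fun i => a (y i)) := by
        gcongr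
        · exact hwnorm y₁ hy₁
        · exact hwnorm y₂ hy₂
    _ = 2 ^ (m + 1) * C * P * wnormDual r (fun i => a (y i)) := by ring

end IsPosDominated

end Dominated

/-- `aD φ` stands for the modulus `|φ|` in the dual lattice `F*`: the least majorant of `φ` and
`-φ` for the dual order. -/
theorem pos_dominated_equiv_absolute_formulation_general
    {m : ℕ} {E : Fin m → Type*}
    [∀ j, NormedAddCommGroup (E j)] [∀ j, Lattice (E j)] [∀ j, IsOrderedAddMonoid (E j)]
    [∀ j, HasSolidNorm (E j)] [∀ j, NormedSpace ℝ (E j)]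
    {F : Type*} [NormedAddCommGroup F] [Lattice F] [IsOrderedAddMonoid F] [HasSolidNorm F]
    [NormedSpace ℝ F]
    (p r : ℝ) (pj : Fin m → ℝ) (hr : 1 ≤ r) (hpj : ∀ j, 1 ≤ pj j) (hp : 1 ≤ p)
    (aD : (F →L[ℝ] ℝ) → (F →L[ℝ] ℝ))
    (haD : ∀ φ : F →L[ℝ] ℝ,
      (∀ y : F, 0 ≤ y → φ y ≤ aD φ y ∧ -φ y ≤ aD φ y) ∧
      ∀ χ : F →L[ℝ] ℝ, (∀ y : F, 0 ≤ y → φ y ≤ χ y ∧ -φ y ≤ χ y) →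
        ∀ y : F, 0 ≤ y → aD φ y ≤ χ y)
    (T : ContinuousMultilinearMap ℝ E F) :
    (∀ C : ℝ, 0 < C →
      (∀ (n : ℕ) (x : Fin n → ∀ j, E j) (y : Fin n → (F →L[ℝ] ℝ)),
        (∀ i j, 0 ≤ x i j) → (∀ i, ∀ z, 0 ≤ z → 0 ≤ y i z) →
        (∑ i, |y i (T (x i))| ^ p) ^ (1 / p) ≤
          C * (∏ j, wnorm (pj j) (fun i => x i j)) * wnormDual r y) →
      (∀ (n : ℕ) (x : Fin n → ∀ j, E j) (y : Fin n → (F →L[ℝ] ℝ)),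
        (∑ i, |y i (T (x i))| ^ p) ^ (1 / p) ≤
          (2 ^ (m + 1) * C) * (∏ j, wnorm (pj j) (fun i => |x i j|)) *
            wnormDual r (fun i => aD (y i)))) ∧
    (∀ C' : ℝ, 0 < C' →
      (∀ (n : ℕ) (x : Fin n → ∀ j, E j) (y : Fin n → (F →L[ℝ] ℝ)),
        (∑ i, |y i (T (x i))| ^ p) ^ (1 / p) ≤
          C' * (∏ j, wnorm (pj j) (fun i => |x i j|)) * wnormDual r (fun i => aD (y i))) →
      (∀ (n : ℕ) (x : Fin n → ∀ j, E j) (y : Fin n → (F →L[ℝ] ℝ)),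
        (∀ i j, 0 ≤ x i j) → (∀ i, ∀ z, 0 ≤ z → 0 ≤ y i z) →
        (∑ i, |y i (T (x i))| ^ p) ^ (1 / p) ≤
          C' * (∏ j, wnorm (pj j) (fun i => x i j)) * wnormDual r y)) := by
  refine ⟨fun C hC hT n x y => ?_, fun C' _ hT n x y hx hy => ?_⟩
  · exact IsPosDominated.rpow_sum_le hT hC.le hp hpj hr
      (fun φ z hz => abs_le'.2 ((haD φ).1 z hz)) x y
  · have hx' : ∀ j, (fun i => |x i j|) = fun i => x i j :=
      fun j => funext fun i => abs_of_nonneg (hx i j)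
    have hy' : (fun i => aD (y i)) = y := funext fun i =>
      modulus_eq_of_nonneg (hy i) (fun z hz => ((haD (y i)).1 z hz).1) (haD (y i)).2
    simpa only [hx', hy'] using hT n x y

/-- Equivalence of the two definitions of positive `(p₁,…,p_m;r)`-dominated multilinear
operators: the domination inequality for positive families (weak norms) holds with some
constant `C` iff the inequality for arbitrary families with `|w|`-norms holds with some
constant `C'`; quantitatively one can take `C' = 2^{m+1} C`, and conversely `C ≤ C'`.
Here `aD φ = |φ|` is the lattice absolute value in the dual `F*`, characterized as the
least upper bound of `φ` and `-φ` for the dual order. -/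
theorem pos_dominated_equiv_absolute_formulation
    {m : ℕ} {E : Fin m → Type*}
    [∀ j, NormedAddCommGroup (E j)] [∀ j, Lattice (E j)] [∀ j, IsOrderedAddMonoid (E j)]
    [∀ j, HasSolidNorm (E j)] [∀ j, NormedSpace ℝ (E j)]
    {F : Type*} [NormedAddCommGroup F] [Lattice F] [IsOrderedAddMonoid F] [HasSolidNorm F]
    [NormedSpace ℝ F]
    (p r : ℝ) (pj : Fin m → ℝ) (hr : 1 ≤ r) (hpj : ∀ j, 1 ≤ pj j) (hp : 1 ≤ p)
    (hhol : 1 / p = (∑ j, 1 / pj j) + 1 / r)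
    (aD : (F →L[ℝ] ℝ) → (F →L[ℝ] ℝ))
    (haD : ∀ φ : F →L[ℝ] ℝ,
      (∀ y : F, 0 ≤ y → φ y ≤ aD φ y ∧ -φ y ≤ aD φ y) ∧
      ∀ χ : F →L[ℝ] ℝ, (∀ y : F, 0 ≤ y → φ y ≤ χ y ∧ -φ y ≤ χ y) →
        ∀ y : F, 0 ≤ y → aD φ y ≤ χ y)
    (T : ContinuousMultilinearMap ℝ E F) :
    (∀ C : ℝ, 0 < C →
      (∀ (n : ℕ) (x : Fin n → ∀ j, E j) (y : Fin n → (F →L[ℝ] ℝ)),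
        (∀ i j, 0 ≤ x i j) → (∀ i, ∀ z, 0 ≤ z → 0 ≤ y i z) →
        (∑ i, |y i (T (x i))| ^ p) ^ (1 / p) ≤
          C * (∏ j, wnorm (pj j) (fun i => x i j)) * wnormDual r y) →
      (∀ (n : ℕ) (x : Fin n → ∀ j, E j) (y : Fin n → (F →L[ℝ] ℝ)),
        (∑ i, |y i (T (x i))| ^ p) ^ (1 / p) ≤
          (2 ^ (m + 1) * C) * (∏ j, wnorm (pj j) (fun i => |x i j|)) *
            wnormDual r (fun i => aD (y i)))) ∧
    (∀ C' : ℝ, 0 < C' →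
      (∀ (n : ℕ) (x : Fin n → ∀ j, E j) (y : Fin n → (F →L[ℝ] ℝ)),
        (∑ i, |y i (T (x i))| ^ p) ^ (1 / p) ≤
          C' * (∏ j, wnorm (pj j) (fun i => |x i j|)) * wnormDual r (fun i => aD (y i))) →
      (∀ (n : ℕ) (x : Fin n → ∀ j, E j) (y : Fin n → (F →L[ℝ] ℝ)),
        (∀ i j, 0 ≤ x i j) → (∀ i, ∀ z, 0 ≤ z → 0 ≤ y i z) →
        (∑ i, |y i (T (x i))| ^ p) ^ (1 / p) ≤
          C' * (∏ j, wnorm (pj j) (fun i => x i j)) * wnormDual r y)) :=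
  pos_dominated_equiv_absolute_formulation_general p r pj hr hpj hp aD haD T
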